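/- arXiv:1206.1720 — 4 statements merged into one kernel-verified Lean document; each statement's English description precedes it below -/
import Mathlib

section
/- Let n ≥ 3 and let α = (α₁,…,αₙ) be a generic n-tuple of positive real numbers. If some subset of {1,…,n} of cardinality n−1 is short, then there are exactly n−1 short singletons and the cardinality of S'(α) is exactly 2^{n−1} − n. -/
/-!
If a set of size `n - 1` is short, the one index `k` outside it carries more weight than all the
others together. Hence a set is short exactly when it avoids `k`: the short singletons are the
`{i}` with `i ≠ k`, and the short sets of size at least two are the subsets of `{k}ᶜ` other than
`∅` and the singletons, `2 ^ (n - 1) - 1 - (n - 1)` of them.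
-/

open Finset

section
variable {ι : Type*} [Fintype ι] [DecidableEq ι]

lemma exists_eq_compl_singleton_of_card_add_one {S : Finset ι} (h : #S + 1 = Fintype.card ι) :
    ∃ k, S = {k}ᶜ := by
  obtain ⟨k, hk⟩ := card_eq_one.mp (show #Sᶜ = 1 by rw [card_compl]; omega)
  exact ⟨k, by rw [← compl_compl S, hk]⟩

lemma sum_lt_sum_compl_iff_notMem {α : ι → ℝ} (hα : ∀ i, 0 ≤ α i) {k : ι}
    (hk : ∑ i ∈ {k}ᶜ, α i < α k) (T : Finset ι) :
    ∑ i ∈ T, α i < ∑ i ∈ Tᶜ, α i ↔ k ∉ T := by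
  constructor
  · intro hT hkT
    have : ∑ i ∈ Tᶜ, α i ≤ ∑ i ∈ {k}ᶜ, α i :=
      sum_le_sum_of_subset_of_nonneg (compl_subset_compl.mpr (singleton_subset_iff.mpr hkT))
        fun i _ _ => hα i
    have : α k ≤ ∑ i ∈ T, α i := single_le_sum (fun i _ => hα i) hkT
    linarith
  · intro hkT
    have : ∑ i ∈ T, α i ≤ ∑ i ∈ {k}ᶜ, α i :=
      sum_le_sum_of_subset_of_nonneg (subset_compl_singleton.mpr hkT) fun i _ _ => hα i
    have : α k ≤ ∑ i ∈ Tᶜ, α i := single_le_sum (fun i _ => hα i) (mem_compl.mpr hkT)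
    linarith

end

lemma card_filter_two_le_card_powerset_add {α : Type*} (s : Finset α) :
    #{T ∈ s.powerset | 2 ≤ #T} + #s + 1 = 2 ^ #s := by
  classical
  have hsmall : {T ∈ s.powerset | ¬ 2 ≤ #T} = s.powersetCard 1 ∪ s.powersetCard 0 := by
    rw [powersetCard_eq_filter, powersetCard_eq_filter, ← filter_or]
    exact filter_congr fun T _ => by omega
  have hdisj : Disjoint (s.powersetCard 1) (s.powersetCard 0) :=
    disjoint_left.mpr fun T h1 h0 => by
      rw [mem_powersetCard] at h1 h0
      omega
  rw [← card_powerset, ← card_filter_add_card_filter_not (s := s.powerset) (fun T => 2 ≤ #T),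
    hsmall, card_union_of_disjoint hdisj, card_powersetCard, card_powersetCard]
  simp [add_assoc]

theorem stmt_3_general (n : ℕ) (α : Fin n → ℝ) (hpos : ∀ i, 0 < α i)
    (hex : ∃ S : Finset (Fin n), S.card = n - 1 ∧
      ∑ i ∈ S, α i < ∑ i ∈ Sᶜ, α i) :
    {i : Fin n | α i < ∑ j ∈ ({i} : Finset (Fin n))ᶜ, α j}.ncard = n - 1 ∧
    {S : Finset (Fin n) | 2 ≤ S.card ∧
      ∑ i ∈ S, α i < ∑ i ∈ Sᶜ, α i}.ncard = 2 ^ (n - 1) - n := by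
  obtain ⟨S, hScard, hSshort⟩ := hex
  obtain _ | n := n
  · simp [Subsingleton.elim S ∅] at hSshort
  obtain ⟨k, rfl⟩ := exists_eq_compl_singleton_of_card_add_one (S := S) (by simpa using hScard)
  have short_iff :=
    sum_lt_sum_compl_iff_notMem (fun i => (hpos i).le) (k := k) (by simpa using hSshort)
  have hcard : #({k}ᶜ : Finset (Fin (n + 1))) = n := by simp [card_compl]
  constructor
  · have hsingletons :
        {i | α i < ∑ j ∈ {i}ᶜ, α j} = (({k}ᶜ : Finset (Fin (n + 1))) : Set (Fin (n + 1))) := by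
      ext i
      simpa [ne_comm] using short_iff {i}
    rw [hsingletons, Set.ncard_coe_finset, hcard, add_tsub_cancel_right]
  · have hlarge : {T : Finset (Fin (n + 1)) | 2 ≤ #T ∧ ∑ i ∈ T, α i < ∑ i ∈ Tᶜ, α i} =
        ↑{T ∈ ({k}ᶜ : Finset (Fin (n + 1))).powerset | 2 ≤ #T} := by
      ext T
      simp [short_iff T, and_comm]
    have hcount := card_filter_two_le_card_powerset_add ({k}ᶜ : Finset (Fin (n + 1)))
    rw [hlarge, Set.ncard_coe_finset, add_tsub_cancel_right]
    rw [hcard] at hcount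
    omega

/-- If `α` is generic, `n ≥ 3`, and some subset of cardinality `n - 1` is short,
then there are exactly `n - 1` short singletons and `|S'(α)| = 2 ^ (n - 1) - n`. -/
theorem stmt_3 (n : ℕ) (hn : 3 ≤ n) (α : Fin n → ℝ) (hpos : ∀ i, 0 < α i)
    (hgen : ∀ S : Finset (Fin n), ∑ i ∈ S, α i ≠ ∑ i ∈ Sᶜ, α i)
    (hex : ∃ S : Finset (Fin n), S.card = n - 1 ∧
      ∑ i ∈ S, α i < ∑ i ∈ Sᶜ, α i) :
    {i : Fin n | α i < ∑ j ∈ ({i} : Finset (Fin n))ᶜ, α j}.ncard = n - 1 ∧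
    {S : Finset (Fin n) | 2 ≤ S.card ∧
      ∑ i ∈ S, α i < ∑ i ∈ Sᶜ, α i}.ncard = 2 ^ (n - 1) - n :=
  stmt_3_general n α hpos hex
end

section
/- Let n ≥ 1, let α₁,…,αₙ be positive real numbers, and let S ⊆ {1,…,n}. Suppose given complex numbers b_i, c_i for i ∈ S and a_i, d_i for i ∉ S satisfying: |c_i|² − |b_i|² = 2α_i for all i ∈ S; |d_i|² − |a_i|² = 2α_i for all i ∉ S; Σ_{i∈S}(|c_i|² + |b_i|²) = Σ_{i∉S}(|a_i|² + |d_i|²); Σ_{i∈S} b_i c_i = 0; and Σ_{i∉S} a_i d_i = 0. If S is short (i.e. Σ_{i∈S} α_i < Σ_{i∉S} α_i) and not all of the numbers b_i (i ∈ S) and a_i (i ∉ S) are zero, then there exist two distinct indices i₁ ≠ i₂ in S with b_{i₁} ≠ 0 and b_{i₂} ≠ 0; in particular |S| ≥ 2. -/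
/-!
Substituting `|c i|² = |b i|² + 2 α i` and `|d i|² = |a i|² + 2 α i` into the real moment map
equation gives `∑_S |b i|² = ∑_Sᶜ |a i|² + (∑_Sᶜ α i - ∑_S α i) > 0`, so some `b i₀ ≠ 0`, and then
`|c i₀|² > 0` as well. If `b i₀` were the only nonzero `b i`, the complex equation would read
`b i₀ * c i₀ = 0`.
-/

open Finset

section

variable {ι : Type*}

theorem sum_normSq_pos_of_sum_lt {s t : Finset ι} {α : ι → ℝ} {a b c d : ι → ℂ}
    (hbc : ∀ i ∈ s, Complex.normSq (c i) - Complex.normSq (b i) = 2 * α i)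
    (had : ∀ i ∈ t, Complex.normSq (d i) - Complex.normSq (a i) = 2 * α i)
    (hsum : ∑ i ∈ s, (Complex.normSq (c i) + Complex.normSq (b i))
      = ∑ i ∈ t, (Complex.normSq (a i) + Complex.normSq (d i)))
    (hlt : ∑ i ∈ s, α i < ∑ i ∈ t, α i) :
    0 < ∑ i ∈ s, Complex.normSq (b i) := by
  have hs : ∑ i ∈ s, (Complex.normSq (c i) + Complex.normSq (b i))
      = ∑ i ∈ s, (2 * Complex.normSq (b i) + 2 * α i) :=
    sum_congr rfl fun i hi => by linarith [hbc i hi]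
  have ht : ∑ i ∈ t, (Complex.normSq (a i) + Complex.normSq (d i))
      = ∑ i ∈ t, (2 * Complex.normSq (a i) + 2 * α i) :=
    sum_congr rfl fun i hi => by linarith [had i hi]
  rw [hs, ht, sum_add_distrib, sum_add_distrib, ← mul_sum, ← mul_sum, ← mul_sum,
    ← mul_sum] at hsum
  have ha : 0 ≤ ∑ i ∈ t, Complex.normSq (a i) := sum_nonneg fun i _ => Complex.normSq_nonneg _
  linarith

theorem exists_ne_ne_zero_of_sum_mul_eq_zero {R : Type*} [NonUnitalNonAssocSemiring R]
    [NoZeroDivisors R] {s : Finset ι} {b c : ι → R} (hsum : ∑ i ∈ s, b i * c i = 0)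
    {i₀ : ι} (hi₀ : i₀ ∈ s) (hb : b i₀ ≠ 0) (hc : c i₀ ≠ 0) :
    ∃ j ∈ s, j ≠ i₀ ∧ b j ≠ 0 := by
  by_contra! h
  rw [sum_eq_single_of_mem i₀ hi₀ fun j hj hji => by rw [h j hj hji, zero_mul]] at hsum
  exact mul_ne_zero hb hc hsum

end

theorem stmt_6_general (n : ℕ) (α : Fin n → ℝ) (hpos : ∀ i, 0 < α i)
    (S : Finset (Fin n)) (a b c d : Fin n → ℂ)
    (hbc : ∀ i ∈ S, Complex.normSq (c i) - Complex.normSq (b i) = 2 * α i)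
    (had : ∀ i ∈ Sᶜ, Complex.normSq (d i) - Complex.normSq (a i) = 2 * α i)
    (hsum : ∑ i ∈ S, (Complex.normSq (c i) + Complex.normSq (b i))
      = ∑ i ∈ Sᶜ, (Complex.normSq (a i) + Complex.normSq (d i)))
    (hS0 : ∑ i ∈ S, b i * c i = 0)
    (hshort : ∑ i ∈ S, α i < ∑ i ∈ Sᶜ, α i) :
    (∃ i₁ ∈ S, ∃ i₂ ∈ S, i₁ ≠ i₂ ∧ b i₁ ≠ 0 ∧ b i₂ ≠ 0) ∧ 2 ≤ S.card := by
  obtain ⟨i₀, hi₀, hb₀⟩ :=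
    exists_ne_zero_of_sum_ne_zero (sum_normSq_pos_of_sum_lt hbc had hsum hshort).ne'
  replace hb₀ : b i₀ ≠ 0 := by rwa [Ne, Complex.normSq_eq_zero] at hb₀
  have hc₀ : c i₀ ≠ 0 := by
    rw [← Complex.normSq_pos]
    linarith [hbc i₀ hi₀, hpos i₀, Complex.normSq_nonneg (b i₀)]
  obtain ⟨j, hj, hji, hbj⟩ := exists_ne_ne_zero_of_sum_mul_eq_zero hS0 hi₀ hb₀ hc₀
  exact ⟨⟨i₀, hi₀, j, hj, hji.symm, hb₀, hbj⟩, one_lt_card.mpr ⟨i₀, hi₀, j, hj, hji.symm⟩⟩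

/-- If `S` is short and the data `(a, b, c, d)` satisfies the real and complex
moment map equations, with not all of the `b i` (`i ∈ S`) and `a i` (`i ∉ S`)
zero, then at least two of the `b i` with `i ∈ S` are nonzero; in particular
`|S| ≥ 2`. -/
theorem stmt_6 (n : ℕ) (hn : 1 ≤ n) (α : Fin n → ℝ) (hpos : ∀ i, 0 < α i)
    (S : Finset (Fin n)) (a b c d : Fin n → ℂ)
    (hbc : ∀ i ∈ S, Complex.normSq (c i) - Complex.normSq (b i) = 2 * α i)
    (had : ∀ i ∈ Sᶜ, Complex.normSq (d i) - Complex.normSq (a i) = 2 * α i)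
    (hsum : ∑ i ∈ S, (Complex.normSq (c i) + Complex.normSq (b i))
      = ∑ i ∈ Sᶜ, (Complex.normSq (a i) + Complex.normSq (d i)))
    (hS0 : ∑ i ∈ S, b i * c i = 0)
    (hSc0 : ∑ i ∈ Sᶜ, a i * d i = 0)
    (hshort : ∑ i ∈ S, α i < ∑ i ∈ Sᶜ, α i)
    (hnz : ¬ ((∀ i ∈ S, b i = 0) ∧ (∀ i ∈ Sᶜ, a i = 0))) :
    (∃ i₁ ∈ S, ∃ i₂ ∈ S, i₁ ≠ i₂ ∧ b i₁ ≠ 0 ∧ b i₂ ≠ 0) ∧ 2 ≤ S.card :=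
  stmt_6_general n α hpos S a b c d hbc had hsum hS0 hshort
end

section
/- Let n ≥ 1, let α₁,…,αₙ be positive real numbers, and let S ⊆ {1,…,n}. Suppose given complex numbers b_i, c_i for i ∈ S and a_i, d_i for i ∉ S satisfying: |c_i|² − |b_i|² = 2α_i for all i ∈ S; |d_i|² − |a_i|² = 2α_i for all i ∉ S; Σ_{i∈S}(|c_i|² + |b_i|²) = Σ_{i∉S}(|a_i|² + |d_i|²); Σ_{i∈S} b_i c_i = 0; and Σ_{i∉S} a_i d_i = 0. Define u_i = (Re(b_i c_i), Im(b_i c_i), (|b_i|² + |c_i|²)/2) ∈ ℝ³ for i ∈ S and u_i = (Re(a_i d_i), −Im(a_i d_i), −(|a_i|² + |d_i|²)/2) ∈ ℝ³ for i ∉ S. Then u_i is future time-like for every i ∈ S, u_i is past time-like for every i ∉ S, u_i ∘ u_i = α_i² for all i, and u₁ + ⋯ + uₙ = 0; that is, the u_i form a closed polygon in Minkowski 3-space whose i-th side has Minkowski length α_i. -/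
/-!
Writing `p = |z|²` and `q = |w|²`, the side built from `(z, w)` has spatial part `z w`, of squared
Euclidean length `p q`, and time component `±(p + q)/2`; its Minkowski square is therefore
`(p + q)²/4 - p q = ((q - p)/2)²`, equal to `α²` when `q - p = 2α`. The two vanishing sums
kill the spatial part of `∑ u`, and the balance of norms kills its time component.
-/

def mink (v w : ℝ × ℝ × ℝ) : ℝ :=
  -(v.1 * w.1) - v.2.1 * w.2.1 + v.2.2 * w.2.2

open Complex Finset

def IsFutureTimelike (v : ℝ × ℝ × ℝ) : Prop := 0 < mink v v ∧ 0 < v.2.2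

def IsPastTimelike (v : ℝ × ℝ × ℝ) : Prop := 0 < mink v v ∧ v.2.2 < 0

noncomputable def futureSide (z w : ℂ) : ℝ × ℝ × ℝ :=
  ((z * w).re, (z * w).im, (normSq z + normSq w) / 2)

noncomputable def pastSide (z w : ℂ) : ℝ × ℝ × ℝ :=
  ((z * w).re, -(z * w).im, -((normSq z + normSq w) / 2))

theorem mink_self_mk (x y t : ℝ) : mink (x, y, t) (x, y, t) = t ^ 2 - (x ^ 2 + y ^ 2) := by
  unfold mink
  ring

section Sides

variable (z w : ℂ)

theorem mink_self_futureSide :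
    mink (futureSide z w) (futureSide z w) = ((normSq w - normSq z) / 2) ^ 2 := by
  have h := normSq_apply (z * w)
  rw [normSq_mul] at h
  rw [futureSide, mink_self_mk]
  linear_combination h

theorem mink_self_pastSide :
    mink (pastSide z w) (pastSide z w) = ((normSq w - normSq z) / 2) ^ 2 := by
  rw [pastSide, mink_self_mk, neg_sq, neg_sq, ← mink_self_mk, ← futureSide, mink_self_futureSide]

variable {z w}

theorem futureSide_isFutureTimelike (h : normSq z < normSq w) :
    IsFutureTimelike (futureSide z w) := by
  refine ⟨?_, ?_⟩
  · rw [mink_self_futureSide]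
    nlinarith
  · have := normSq_nonneg z
    simp only [futureSide]
    linarith

theorem pastSide_isPastTimelike (h : normSq z < normSq w) :
    IsPastTimelike (pastSide z w) := by
  refine ⟨?_, ?_⟩
  · rw [mink_self_pastSide]
    nlinarith
  · have := normSq_nonneg z
    simp only [pastSide]
    linarith

end Sides

section Sums

variable {ι : Type*} (s : Finset ι) (z w : ι → ℂ)

theorem sum_futureSide :
    ∑ i ∈ s, futureSide (z i) (w i) =
      ((∑ i ∈ s, z i * w i).re, (∑ i ∈ s, z i * w i).im,
        (∑ i ∈ s, (normSq (z i) + normSq (w i))) / 2) := by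
  ext <;> simp only [futureSide, Prod.fst_sum, Prod.snd_sum, re_sum, im_sum, sum_div]

theorem sum_pastSide :
    ∑ i ∈ s, pastSide (z i) (w i) =
      ((∑ i ∈ s, z i * w i).re, -(∑ i ∈ s, z i * w i).im,
        -((∑ i ∈ s, (normSq (z i) + normSq (w i))) / 2)) := by
  ext <;>
    simp only [pastSide, Prod.fst_sum, Prod.snd_sum, re_sum, im_sum, sum_neg_distrib, sum_div]

end Sums

theorem stmt_7_general (n : ℕ) (α : Fin n → ℝ) (hpos : ∀ i, 0 < α i)
    (S : Finset (Fin n)) (a b c d : Fin n → ℂ)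
    (hbc : ∀ i ∈ S, Complex.normSq (c i) - Complex.normSq (b i) = 2 * α i)
    (had : ∀ i ∈ Sᶜ, Complex.normSq (d i) - Complex.normSq (a i) = 2 * α i)
    (hsum : ∑ i ∈ S, (Complex.normSq (c i) + Complex.normSq (b i))
      = ∑ i ∈ Sᶜ, (Complex.normSq (a i) + Complex.normSq (d i)))
    (hS0 : ∑ i ∈ S, b i * c i = 0)
    (hSc0 : ∑ i ∈ Sᶜ, a i * d i = 0)
    (u : Fin n → ℝ × ℝ × ℝ)
    (huS : ∀ i ∈ S, u i = ((b i * c i).re, (b i * c i).im,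
      (Complex.normSq (b i) + Complex.normSq (c i)) / 2))
    (huSc : ∀ i ∈ Sᶜ, u i = ((a i * d i).re, -(a i * d i).im,
      -((Complex.normSq (a i) + Complex.normSq (d i)) / 2))) :
    (∀ i ∈ S, 0 < mink (u i) (u i) ∧ 0 < (u i).2.2) ∧
    (∀ i ∈ Sᶜ, 0 < mink (u i) (u i) ∧ (u i).2.2 < 0) ∧
    (∀ i, mink (u i) (u i) = (α i) ^ 2) ∧
    ∑ i, u i = 0 := by
  have hfut : ∀ i ∈ S, u i = futureSide (b i) (c i) := huS
  have hpast : ∀ i ∈ Sᶜ, u i = pastSide (a i) (d i) := huSc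
  refine ⟨fun i hi => ?_, fun i hi => ?_, fun i => ?_, ?_⟩
  · rw [hfut i hi]
    exact futureSide_isFutureTimelike (by linarith [hbc i hi, hpos i])
  · rw [hpast i hi]
    exact pastSide_isPastTimelike (by linarith [had i hi, hpos i])
  · by_cases hi : i ∈ S
    · rw [hfut i hi, mink_self_futureSide, hbc i hi]
      ring
    · rw [hpast i (mem_compl.mpr hi), mink_self_pastSide, had i (mem_compl.mpr hi)]
      ring
  · have hbalance : ∑ i ∈ S, (normSq (b i) + normSq (c i))
        = ∑ i ∈ Sᶜ, (normSq (a i) + normSq (d i)) := by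
      simpa only [add_comm] using hsum
    rw [← sum_add_sum_compl S u, sum_congr rfl hfut, sum_congr rfl hpast, sum_futureSide,
      sum_pastSide, hS0, hSc0, hbalance]
    ext <;> simp

/-- The vectors `u i` built from data satisfying the moment map equations form
a closed polygon in Minkowski `3`-space: the sides indexed by `S` are future
time-like, the ones indexed by `Sᶜ` are past time-like, the `i`-th side has
Minkowski length `α i`, and the sides sum to zero. -/
theorem stmt_7 (n : ℕ) (hn : 1 ≤ n) (α : Fin n → ℝ) (hpos : ∀ i, 0 < α i)
    (S : Finset (Fin n)) (a b c d : Fin n → ℂ)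
    (hbc : ∀ i ∈ S, Complex.normSq (c i) - Complex.normSq (b i) = 2 * α i)
    (had : ∀ i ∈ Sᶜ, Complex.normSq (d i) - Complex.normSq (a i) = 2 * α i)
    (hsum : ∑ i ∈ S, (Complex.normSq (c i) + Complex.normSq (b i))
      = ∑ i ∈ Sᶜ, (Complex.normSq (a i) + Complex.normSq (d i)))
    (hS0 : ∑ i ∈ S, b i * c i = 0)
    (hSc0 : ∑ i ∈ Sᶜ, a i * d i = 0)
    (u : Fin n → ℝ × ℝ × ℝ)
    (huS : ∀ i ∈ S, u i = ((b i * c i).re, (b i * c i).im,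
      (Complex.normSq (b i) + Complex.normSq (c i)) / 2))
    (huSc : ∀ i ∈ Sᶜ, u i = ((a i * d i).re, -(a i * d i).im,
      -((Complex.normSq (a i) + Complex.normSq (d i)) / 2))) :
    (∀ i ∈ S, 0 < mink (u i) (u i) ∧ 0 < (u i).2.2) ∧
    (∀ i ∈ Sᶜ, 0 < mink (u i) (u i) ∧ (u i).2.2 < 0) ∧
    (∀ i, mink (u i) (u i) = (α i) ^ 2) ∧
    ∑ i, u i = 0 :=
  stmt_7_general n α hpos S a b c d hbc had hsum hS0 hSc0 u huS huSc
end

section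
/- Let k ≥ 1, let α₁,…,α_k be positive real numbers and let R > 0. Then the set {(u₁,…,u_k) ∈ (ℝ³)^k : u_i ∘ u_i = α_i² and (u_i)₃ > 0 for all i, and u₁ + ⋯ + u_k = (0, 0, R)} is a compact subset of (ℝ³)^k. (This is the key step showing that the moduli space M^{k,1}(α) of closed Minkowski polygons with a single past time-like side is compact.) -/
/-!
A future time-like vector `v` with `v ∘ v = a² > 0` dominates its spatial coordinates,
`|v₁|, |v₂| ≤ v₃`, so its sup norm is its time coordinate `v₃`. If the sides of a polygon sum to
`w`, their time coordinates are positive and sum to `w₃`, so every side has norm at most `w₃`.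
The constraint set is also closed: since `a ≠ 0`, the condition `v₃ > 0` on the hyperboloid
`v ∘ v = a²` can be relaxed to `v₃ ≥ 0`.
-/

lemma mink_self (v : ℝ × ℝ × ℝ) : mink v v = v.2.2 ^ 2 - v.1 ^ 2 - v.2.1 ^ 2 := by
  unfold mink
  ring

lemma continuous_mink_self : Continuous fun v : ℝ × ℝ × ℝ => mink v v := by
  unfold mink
  fun_prop

lemma norm_eq_of_mink_self_nonneg {v : ℝ × ℝ × ℝ} (h : 0 ≤ mink v v) (h₃ : 0 ≤ v.2.2) :
    ‖v‖ = v.2.2 := by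
  rw [mink_self] at h
  have h₁ : |v.1| ≤ v.2.2 := abs_le_of_sq_le_sq (by nlinarith [sq_nonneg v.2.1]) h₃
  have h₂ : |v.2.1| ≤ v.2.2 := abs_le_of_sq_le_sq (by nlinarith [sq_nonneg v.1]) h₃
  simp only [Prod.norm_def, Real.norm_eq_abs, abs_of_nonneg h₃, max_eq_right h₂,
    max_eq_right h₁]

lemma pos_of_mink_self_eq_sq {v : ℝ × ℝ × ℝ} {a : ℝ} (ha : a ≠ 0) (h : mink v v = a ^ 2)
    (h₃ : 0 ≤ v.2.2) : 0 < v.2.2 := by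
  refine h₃.lt_of_ne fun h₀ => ?_
  rw [mink_self, ← h₀] at h
  nlinarith [sq_nonneg v.1, sq_nonneg v.2.1, pow_pos (abs_pos.2 ha) 2, sq_abs a]

def futureHyperboloid (a : ℝ) : Set (ℝ × ℝ × ℝ) :=
  {v | mink v v = a ^ 2 ∧ 0 < v.2.2}

lemma futureHyperboloid_eq {a : ℝ} (ha : a ≠ 0) :
    futureHyperboloid a = {v | mink v v = a ^ 2 ∧ 0 ≤ v.2.2} := by
  ext v
  exact ⟨fun h => ⟨h.1, h.2.le⟩, fun h => ⟨h.1, pos_of_mink_self_eq_sq ha h.1 h.2⟩⟩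

lemma isClosed_futureHyperboloid {a : ℝ} (ha : a ≠ 0) : IsClosed (futureHyperboloid a) := by
  rw [futureHyperboloid_eq ha]
  exact (isClosed_eq continuous_mink_self continuous_const).inter
    (isClosed_le continuous_const (continuous_snd.comp continuous_snd))

lemma norm_eq_of_mem_futureHyperboloid {a : ℝ} {v : ℝ × ℝ × ℝ} (hv : v ∈ futureHyperboloid a) :
    ‖v‖ = v.2.2 :=
  norm_eq_of_mink_self_nonneg (hv.1 ▸ sq_nonneg a) hv.2.le

theorem isCompact_setOf_sum_eq_of_mem_futureHyperboloid {ι : Type*} [Fintype ι] (α : ι → ℝ)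
    (hα : ∀ i, α i ≠ 0) (w : ℝ × ℝ × ℝ) :
    IsCompact {u : ι → ℝ × ℝ × ℝ | (∀ i, u i ∈ futureHyperboloid (α i)) ∧ ∑ i, u i = w} := by
  have hclosed : IsClosed {u : ι → ℝ × ℝ × ℝ |
      (∀ i, u i ∈ futureHyperboloid (α i)) ∧ ∑ i, u i = w} := by
    have hpi := isClosed_set_pi (i := Set.univ) fun i _ => isClosed_futureHyperboloid (hα i)
    simp only [Set.pi, Set.mem_univ, true_implies] at hpi
    exact hpi.inter (isClosed_eq (continuous_finsetSum _ fun i _ => continuous_apply i)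
      continuous_const)
  refine Metric.isCompact_of_isClosed_isBounded hclosed
    (isBounded_iff_forall_norm_le.2 ⟨|w.2.2|, fun u ⟨hu, hsum⟩ => ?_⟩)
  refine (pi_norm_le_iff_of_nonneg (abs_nonneg _)).2 fun i => ?_
  have htime : ∑ j, (u j).2.2 = w.2.2 := by
    rw [← hsum, Prod.snd_sum, Prod.snd_sum]
  calc ‖u i‖ = (u i).2.2 := norm_eq_of_mem_futureHyperboloid (hu i)
    _ ≤ ∑ j, (u j).2.2 :=
      Finset.single_le_sum (fun j _ => (hu j).2.le) (Finset.mem_univ i)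
    _ ≤ |w.2.2| := htime ▸ le_abs_self _

theorem stmt_17_general (k : ℕ) (α : Fin k → ℝ) (hpos : ∀ i, 0 < α i)
    (R : ℝ) :
    IsCompact {u : Fin k → ℝ × ℝ × ℝ |
      (∀ i, mink (u i) (u i) = (α i) ^ 2 ∧ 0 < (u i).2.2) ∧
      ∑ i, u i = ((0 : ℝ), (0 : ℝ), R)} :=
  isCompact_setOf_sum_eq_of_mem_futureHyperboloid α (fun i => (hpos i).ne') _

/-- The set of `k`-tuples of future time-like vectors with prescribed Minkowski
lengths `α i` summing to `(0, 0, R)` is compact: key step in the compactness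
of `M^{k,1}(α)`. -/
theorem stmt_17 (k : ℕ) (hk : 1 ≤ k) (α : Fin k → ℝ) (hpos : ∀ i, 0 < α i)
    (R : ℝ) (hR : 0 < R) :
    IsCompact {u : Fin k → ℝ × ℝ × ℝ |
      (∀ i, mink (u i) (u i) = (α i) ^ 2 ∧ 0 < (u i).2.2) ∧
      ∑ i, u i = ((0 : ℝ), (0 : ℝ), R)} :=
  stmt_17_general k α hpos R
end
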